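/- Let [a,b] ⊂ ℝ, n ≥ 1, h = (b-a)/n, a_i = a + ih. Let φ : [a_i, a_{i+1}] → ℝ be a continuous function, extended by 0 outside [a_i, a_{i+1}], giving f_i : [a,b] → ℝ. Suppose that for each m ≥ 1 the m-fold iterated integral of φ over [a_i, a_{i+1}] equals h^{r+m} V_m for constants V_m. Then for any k ≥ 1, the k-fold iterated integral ∫_a^b ∫_a^{y_{k-1}} ⋯ ∫_a^{y_1} f_i(y_0) dy_0 ⋯ dy_{k-1} equals h^{r+k} Σ_{m=1}^k (1/(k-m)!) V_m (n-i-1)^{k-m}. -/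

import Mathlib

/-!
Left of the bump the iterated integrals from `a` and from `aᵢ` agree, since both integrands vanish
on `[a, aᵢ]`. Right of the bump `f = 0`, so the `k`-fold integral is a polynomial in `x - aᵢ₊₁`
whose coefficients are the `j`-fold integrals at `aᵢ₊₁` divided by `(k - j)!`: a Taylor expansion.
With `b - aᵢ₊₁ = (n - i - 1) h` and the prescribed values `h ^ (r + j) V j` this is the formula.
-/

noncomputable def iterInt (f : ℝ → ℝ) (a : ℝ) : ℕ → ℝ → ℝ
  | 0 => f
  | m + 1 => fun x => ∫ y in a..x, iterInt f a m y

open Set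

lemma Continuous.eqOn_zero_Iic_and_Ici {f : ℝ → ℝ} (hf : Continuous f) {c d : ℝ}
    (h : ∀ x, x ∉ Icc c d → f x = 0) : EqOn f 0 (Iic c) ∧ EqOn f 0 (Ici d) := by
  rw [← closure_Iio, ← closure_Ioi]
  exact ⟨EqOn.closure (fun x hx => h x fun hx' => not_le.2 hx hx'.1) hf continuous_const,
    EqOn.closure (fun x hx => h x fun hx' => not_le.2 hx hx'.2) hf continuous_const⟩

lemma integral_sub_pow_div_factorial (d x : ℝ) (p : ℕ) :
    ∫ y in d..x, (y - d) ^ p / (p.factorial : ℝ) = (x - d) ^ (p + 1) / ((p + 1).factorial : ℝ) := by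
  rw [intervalIntegral.integral_div, intervalIntegral.integral_comp_sub_right (· ^ p), integral_pow,
    Nat.factorial_succ]
  push_cast
  field_simp
  ring

namespace iterInt

variable {f : ℝ → ℝ}

lemma continuous (hf : Continuous f) (c : ℝ) : ∀ m, Continuous (iterInt f c m)
  | 0 => hf
  | m + 1 => intervalIntegral.continuous_primitive
      (fun _ _ => (continuous hf c m).intervalIntegrable _ _) c

lemma eq_zero_of_le {c : ℝ} (h0 : EqOn f 0 (Iic c)) :
    ∀ m {x}, x ≤ c → iterInt f c m x = 0
  | 0, x, hx => h0 hx
  | m + 1, x, hx => by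
    show ∫ y in c..x, iterInt f c m y = 0
    rw [intervalIntegral.integral_congr (g := 0) fun y hy => eq_zero_of_le h0 m ?_]
    · simp
    · rw [uIcc_of_ge hx] at hy
      exact hy.2

lemma eq_of_le {a c : ℝ} (hf : Continuous f) (hac : a ≤ c) (h0 : EqOn f 0 (Iic c)) :
    ∀ m, iterInt f a m = iterInt f c m
  | 0 => rfl
  | m + 1 => by
    funext x
    have hcont := continuous hf c m
    show ∫ y in a..x, iterInt f a m y = ∫ y in c..x, iterInt f c m y
    rw [eq_of_le hf hac h0 m, ← intervalIntegral.integral_add_adjacent_intervals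
      (hcont.intervalIntegrable a c) (hcont.intervalIntegrable c x),
      intervalIntegral.integral_congr (g := 0) fun y hy => eq_zero_of_le h0 m ?_]
    · simp
    · rw [uIcc_of_le hac] at hy
      exact hy.2

lemma eq_sum_of_le {c d : ℝ} (hf : Continuous f) (h0 : EqOn f 0 (Ici d)) :
    ∀ m {x}, d ≤ x → iterInt f c m x
      = ∑ j ∈ Finset.Icc 1 m, iterInt f c j d * ((x - d) ^ (m - j) / ((m - j).factorial : ℝ))
  | 0, x, hx => by simpa [iterInt] using h0 hx
  | m + 1, x, hx => by
    have hcont := continuous hf c m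
    have hshift : ∀ j ∈ Finset.Icc 1 m, m + 1 - j = (m - j) + 1 := fun j hj => by
      have := (Finset.mem_Icc.1 hj).2
      omega
    have htail : ∫ y in d..x, iterInt f c m y
        = ∑ j ∈ Finset.Icc 1 m, iterInt f c j d * ((x - d) ^ (m + 1 - j)
            / ((m + 1 - j).factorial : ℝ)) := by
      rw [intervalIntegral.integral_congr fun y hy => eq_sum_of_le hf h0 m ?_,
        intervalIntegral.integral_finsetSum fun j _ => by
          apply Continuous.intervalIntegrable; fun_prop]
      · refine Finset.sum_congr rfl fun j hj => ?_
        rw [intervalIntegral.integral_const_mul, integral_sub_pow_div_factorial, hshift j hj]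
      · rw [uIcc_of_le hx] at hy
        exact hy.1
    show ∫ y in c..x, iterInt f c m y = _
    rw [← intervalIntegral.integral_add_adjacent_intervals
      (hcont.intervalIntegrable c d) (hcont.intervalIntegrable d x), htail,
      Finset.sum_Icc_succ_top (by omega), add_comm]
    simp [iterInt]

end iterInt

theorem stmt4_general (a b : ℝ) (hab : a < b) (n k r i : ℕ)
    (hi : i < n) (h ai ai1 : ℝ) (hh : h = (b - a) / n) (hai : ai = a + i * h)
    (hai1 : ai1 = a + (i + 1) * h) (f : ℝ → ℝ) (hf : Continuous f) (V : ℕ → ℝ)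
    (hsupp : ∀ x, x ∉ Set.Icc ai ai1 → f x = 0)
    (hval : ∀ m, 1 ≤ m → iterInt f ai m ai1 = h ^ (r + m) * V m) :
    iterInt f a k b
      = h ^ (r + k) * ∑ m ∈ Finset.Icc 1 k,
          (1 / ((k - m).factorial : ℝ)) * V m * ((n : ℝ) - i - 1) ^ (k - m) := by
  have hn0 : (0 : ℝ) < n := by exact_mod_cast Nat.zero_lt_of_lt hi
  have hin : (i : ℝ) + 1 ≤ n := by exact_mod_cast hi
  have hh0 : 0 ≤ h := hh ▸ div_nonneg (by linarith) hn0.le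
  have hgap : b - ai1 = (n - i - 1) * h := by
    rw [hai1, hh]
    field_simp
    ring
  obtain ⟨hlo, hhi⟩ := hf.eqOn_zero_Iic_and_Ici hsupp
  rw [iterInt.eq_of_le hf (hai ▸ le_add_of_nonneg_right (by positivity)) hlo,
    iterInt.eq_sum_of_le hf hhi k (by nlinarith), Finset.mul_sum]
  refine Finset.sum_congr rfl fun j hj => ?_
  obtain ⟨hj1, hjk⟩ := Finset.mem_Icc.1 hj
  rw [hval j hj1, hgap, mul_pow, show r + k = r + j + (k - j) by omega, pow_add]
  ring

theorem stmt4 (a b : ℝ) (hab : a < b) (n k r i : ℕ) (hn : 1 ≤ n) (hk : 1 ≤ k) (hr : 1 ≤ r)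
    (hi : i < n) (h ai ai1 : ℝ) (hh : h = (b - a) / n) (hai : ai = a + i * h)
    (hai1 : ai1 = a + (i + 1) * h) (f : ℝ → ℝ) (hf : Continuous f) (V : ℕ → ℝ)
    (hsupp : ∀ x, x ∉ Set.Icc ai ai1 → f x = 0)
    (hval : ∀ m, 1 ≤ m → iterInt f ai m ai1 = h ^ (r + m) * V m) :
    iterInt f a k b
      = h ^ (r + k) * ∑ m ∈ Finset.Icc 1 k,
          (1 / ((k - m).factorial : ℝ)) * V m * ((n : ℝ) - i - 1) ^ (k - m) :=
  stmt4_general a b hab n k r i hi h ai ai1 hh hai hai1 f hf V hsupp hval
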